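/- For every ordinal α, the value of v at the constant sequence (α, α, α, …) equals α ⨳ ω, the natural product of α with the first infinite ordinal. -/

import Mathlib

universe u

namespace Ordinal

/-- Natural (Hessenberg) addition of ordinals, as in the former `Mathlib.SetTheory.Ordinal.NaturalOps`. -/
noncomputable def nadd (a b : Ordinal.{u}) : Ordinal.{u} :=
  max (⨆ x : Set.Iio a, Order.succ (nadd x.1 b)) (⨆ x : Set.Iio b, Order.succ (nadd a x.1))
termination_by (a, b)
decreasing_by
  · exact Prod.Lex.left _ _ x.2
  · exact Prod.Lex.right _ x.2

/-- Natural (Hessenberg) multiplication of ordinals, as in the former `Mathlib.SetTheory.Ordinal.NaturalOps`. -/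
noncomputable def nmul (a b : Ordinal.{u}) : Ordinal.{u} :=
  sInf {c | ∀ a' < a, ∀ b' < b, nadd (nmul a' b) (nmul a b') < nadd c (nmul a' b')}
termination_by (a, b)
decreasing_by
  · exact Prod.Lex.left _ _ (by assumption)
  · exact Prod.Lex.right _ (by assumption)
  · exact Prod.Lex.left _ _ (by assumption)

end Ordinal

infixl:65 " ♯ " => Ordinal.nadd
infixl:70 " ⨳ " => Ordinal.nmul

open Ordinal

/-- `b ≺ a` iff there are an index `i₀`, a finite set `F ⊆ ℕ` and an ordinal `β` with
`b i₀ ≤ β < a i₀`, `b i ≤ a i` for all `i`, and `b i ≤ β` for all `i ∉ F`. -/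
def seqPrec (b a : ℕ → Ordinal.{0}) : Prop :=
  ∃ (i₀ : ℕ) (F : Finset ℕ) (β : Ordinal),
    b i₀ ≤ β ∧ β < a i₀ ∧ (∀ i, b i ≤ a i) ∧ ∀ i ∉ F, b i ≤ β

/-- `v a`: the rank of the sequence `a` in the well-founded relation `≺`. -/
noncomputable def vRank (hwf : WellFounded seqPrec) (a : ℕ → Ordinal.{0}) : Ordinal.{1} :=
  @IsWellFounded.rank _ seqPrec ⟨hwf⟩ a


namespace VRA

theorem nadd_def' (a b : Ordinal.{u}) : a ♯ b =
    max (⨆ x : Set.Iio a, Order.succ (x.1 ♯ b)) (⨆ x : Set.Iio b, Order.succ (a ♯ x.1)) := by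
  rw [Ordinal.nadd]

theorem lt_nadd_iff {a b c : Ordinal.{u}} :
    a < b ♯ c ↔ (∃ b' < b, a ≤ b' ♯ c) ∨ ∃ c' < c, a ≤ b ♯ c' := by
  rw [nadd_def']
  simp only [lt_max_iff, Ordinal.lt_iSup_iff, Order.lt_succ_iff, Subtype.exists, Set.mem_Iio,
    exists_prop]

theorem nadd_le_iff {a b c : Ordinal.{u}} :
    b ♯ c ≤ a ↔ (∀ b' < b, b' ♯ c < a) ∧ ∀ c' < c, b ♯ c' < a := by
  rw [← not_lt, lt_nadd_iff]
  push_neg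
  exact Iff.rfl

theorem nadd_lt_nadd_left {b c : Ordinal.{u}} (h : b < c) (a : Ordinal.{u}) : a ♯ b < a ♯ c :=
  lt_nadd_iff.2 (Or.inr ⟨b, h, le_rfl⟩)

theorem nadd_lt_nadd_right {b c : Ordinal.{u}} (h : b < c) (a : Ordinal.{u}) : b ♯ a < c ♯ a :=
  lt_nadd_iff.2 (Or.inl ⟨b, h, le_rfl⟩)

theorem nadd_le_nadd_left {b c : Ordinal.{u}} (h : b ≤ c) (a : Ordinal.{u}) : a ♯ b ≤ a ♯ c := by
  rcases h.lt_or_eq with h | rfl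
  · exact (nadd_lt_nadd_left h a).le
  · exact le_rfl

theorem nadd_le_nadd_right {b c : Ordinal.{u}} (h : b ≤ c) (a : Ordinal.{u}) : b ♯ a ≤ c ♯ a := by
  rcases h.lt_or_eq with h | rfl
  · exact (nadd_lt_nadd_right h a).le
  · exact le_rfl

theorem nadd_le_nadd {a b c d : Ordinal.{u}} (h₁ : a ≤ b) (h₂ : c ≤ d) : a ♯ c ≤ b ♯ d :=
  (nadd_le_nadd_left h₂ a).trans (nadd_le_nadd_right h₁ d)

theorem nadd_lt_nadd_of_lt_of_le {a b c d : Ordinal.{u}} (h₁ : a < b) (h₂ : c ≤ d) :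
    a ♯ c < b ♯ d :=
  (nadd_lt_nadd_right h₁ c).trans_le (nadd_le_nadd_left h₂ b)

theorem le_of_nadd_le_nadd_right {a b c : Ordinal.{u}} (h : a ♯ c ≤ b ♯ c) : a ≤ b :=
  le_of_not_gt fun h' => lt_irrefl _ ((nadd_lt_nadd_right h' c).trans_le h)

theorem le_of_nadd_le_nadd_left {a b c : Ordinal.{u}} (h : a ♯ b ≤ a ♯ c) : b ≤ c :=
  le_of_not_gt fun h' => lt_irrefl _ ((nadd_lt_nadd_left h' a).trans_le h)

theorem nadd_lt_nadd_iff_right {a b c : Ordinal.{u}} : b ♯ a < c ♯ a ↔ b < c :=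
  ⟨fun h => lt_of_not_ge fun h' => lt_irrefl _ ((nadd_le_nadd_right h' a).trans_lt h),
    fun h => nadd_lt_nadd_right h a⟩

theorem nadd_comm (a b : Ordinal.{u}) : a ♯ b = b ♯ a := by
  induction a using Ordinal.induction generalizing b with
  | _ a IHa =>
    induction b using Ordinal.induction with
    | _ b IHb =>
      rw [nadd_def' a b, nadd_def' b a, max_comm]
      congr 1
      · congr 1; funext x; rw [IHb x.1 x.2]
      · congr 1; funext x; rw [IHa x.1 x.2]

@[simp] theorem nadd_zero (a : Ordinal.{u}) : a ♯ 0 = a := by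
  induction a using Ordinal.induction with
  | _ a IH =>
    apply le_antisymm
    · rw [nadd_le_iff]
      refine ⟨fun b hb => by rw [IH b hb]; exact hb, fun c hc => absurd hc (not_lt_zero)⟩
    · apply le_of_forall_lt
      intro c hc
      calc c = c ♯ 0 := (IH c hc).symm
      _ < a ♯ 0 := nadd_lt_nadd_right hc 0

@[simp] theorem zero_nadd (a : Ordinal.{u}) : 0 ♯ a = a := by
  rw [nadd_comm, nadd_zero]

theorem le_self_nadd (a b : Ordinal.{u}) : a ≤ a ♯ b :=
  calc a = a ♯ 0 := (nadd_zero a).symm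
  _ ≤ a ♯ b := nadd_le_nadd_left zero_le a

theorem nadd_succ (a b : Ordinal.{u}) : a ♯ Order.succ b = Order.succ (a ♯ b) := by
  induction a using Ordinal.induction with
  | _ a IH =>
    apply le_antisymm
    · rw [nadd_le_iff]
      refine ⟨fun a' ha' => ?_, fun c hc => ?_⟩
      · rw [IH a' ha', Order.succ_lt_succ_iff]
        exact nadd_lt_nadd_right ha' b
      · rw [Order.lt_succ_iff] at hc ⊢
        exact nadd_le_nadd_left hc a
    · exact Order.succ_le_of_lt (nadd_lt_nadd_left (Order.lt_succ b) a)

theorem nadd_assoc (a b c : Ordinal.{u}) : a ♯ b ♯ c = a ♯ (b ♯ c) := by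
  induction a using Ordinal.induction generalizing b c with
  | _ a IHa =>
    induction b using Ordinal.induction generalizing c with
    | _ b IHb =>
      induction c using Ordinal.induction with
      | _ c IHc =>
        apply le_antisymm
        · rw [nadd_le_iff]
          refine ⟨fun d hd => ?_, fun c' hc' => ?_⟩
          · rcases lt_nadd_iff.1 hd with ⟨a', ha', hd'⟩ | ⟨b', hb', hd'⟩
            · calc d ♯ c ≤ a' ♯ b ♯ c := nadd_le_nadd_right hd' c
              _ = a' ♯ (b ♯ c) := IHa a' ha' b c
              _ < a ♯ (b ♯ c) := nadd_lt_nadd_right ha' _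
            · calc d ♯ c ≤ a ♯ b' ♯ c := nadd_le_nadd_right hd' c
              _ = a ♯ (b' ♯ c) := IHb b' hb' c
              _ < a ♯ (b ♯ c) := nadd_lt_nadd_left (nadd_lt_nadd_right hb' c) a
          · rw [IHc c' hc']
            exact nadd_lt_nadd_left (nadd_lt_nadd_left hc' b) a
        · rw [nadd_le_iff]
          refine ⟨fun a' ha' => ?_, fun d hd => ?_⟩
          · rw [← IHa a' ha' b c]
            exact nadd_lt_nadd_right (nadd_lt_nadd_right ha' b) c
          · rcases lt_nadd_iff.1 hd with ⟨b', hb', hd'⟩ | ⟨c', hc', hd'⟩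
            · calc a ♯ d ≤ a ♯ (b' ♯ c) := nadd_le_nadd_left hd' a
              _ = a ♯ b' ♯ c := (IHb b' hb' c).symm
              _ < a ♯ b ♯ c := nadd_lt_nadd_right (nadd_lt_nadd_left hb' a) c
            · calc a ♯ d ≤ a ♯ (b ♯ c') := nadd_le_nadd_left hd' a
              _ = a ♯ b ♯ c' := (IHc c' hc').symm
              _ < a ♯ b ♯ c := nadd_lt_nadd_left hc' _

instance nadd_isAssoc : Std.Associative (α := Ordinal.{u}) (· ♯ ·) := ⟨nadd_assoc⟩

instance nadd_isComm : Std.Commutative (α := Ordinal.{u}) (· ♯ ·) := ⟨nadd_comm⟩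

theorem nadd_nat (a : Ordinal.{u}) (n : ℕ) : a ♯ (n : Ordinal) = a + n := by
  induction n with
  | zero => simp
  | succ n IH => rw [Nat.cast_succ, add_one_eq_succ, nadd_succ, IH, add_succ]

theorem lt_of_nadd_lt_ac {x y X L R : Ordinal.{u}} (h : L < R) (hL : L = x ♯ X)
    (hR : R = y ♯ X) : x < y := by
  rw [hL, hR] at h
  exact nadd_lt_nadd_iff_right.1 h

/-! natural multiplication -/

theorem nmul_def' (a b : Ordinal.{u}) :
    a ⨳ b = sInf {c | ∀ a' < a, ∀ b' < b, a' ⨳ b ♯ a ⨳ b' < c ♯ a' ⨳ b'} := by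
  rw [Ordinal.nmul]

theorem nmul_nonempty (a b : Ordinal.{u}) :
    {c : Ordinal.{u} | ∀ a' < a, ∀ b' < b, a' ⨳ b ♯ a ⨳ b' < c ♯ a' ⨳ b'}.Nonempty := by
  let f : Set.Iio a × Set.Iio b → Ordinal.{u} := fun p => p.1.1 ⨳ b ♯ a ⨳ p.2.1
  obtain ⟨c, hc⟩ : BddAbove (Set.range f) := Ordinal.bddAbove_of_small
  refine ⟨Order.succ c, fun a' ha' b' hb' => ?_⟩
  have h1 : f (⟨a', ha'⟩, ⟨b', hb'⟩) ≤ c := hc ⟨_, rfl⟩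
  calc a' ⨳ b ♯ a ⨳ b' ≤ c := h1
  _ < Order.succ c := Order.lt_succ c
  _ ≤ Order.succ c ♯ a' ⨳ b' := le_self_nadd _ _

theorem nmul_nadd_lt {a b a' b' : Ordinal.{u}} (ha : a' < a) (hb : b' < b) :
    a' ⨳ b ♯ a ⨳ b' < a ⨳ b ♯ a' ⨳ b' := by
  rw [nmul_def' a b]
  exact csInf_mem (nmul_nonempty a b) a' ha b' hb

theorem nmul_nadd_le {a b a' b' : Ordinal.{u}} (ha : a' ≤ a) (hb : b' ≤ b) :
    a' ⨳ b ♯ a ⨳ b' ≤ a ⨳ b ♯ a' ⨳ b' := by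
  rcases ha.lt_or_eq with ha | rfl
  · rcases hb.lt_or_eq with hb | rfl
    · exact (nmul_nadd_lt ha hb).le
    · rw [nadd_comm]
  · exact le_rfl

theorem lt_nmul_iff {a b c : Ordinal.{u}} :
    c < a ⨳ b ↔ ∃ a' < a, ∃ b' < b, c ♯ a' ⨳ b' ≤ a' ⨳ b ♯ a ⨳ b' := by
  refine ⟨fun h => ?_, ?_⟩
  · rw [nmul_def'] at h
    have := notMem_of_lt_csInf h (OrderBot.bddBelow _)
    simp only [Set.mem_setOf_eq] at this
    push_neg at this
    exact this
  · rintro ⟨a', ha, b', hb, h⟩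
    exact nadd_lt_nadd_iff_right.1 (h.trans_lt (nmul_nadd_lt ha hb))

theorem nmul_le_iff {a b c : Ordinal.{u}} :
    a ⨳ b ≤ c ↔ ∀ a' < a, ∀ b' < b, a' ⨳ b ♯ a ⨳ b' < c ♯ a' ⨳ b' := by
  rw [← not_lt, lt_nmul_iff]
  push_neg
  exact Iff.rfl

theorem nmul_comm (a b : Ordinal.{u}) : a ⨳ b = b ⨳ a := by
  induction a using Ordinal.induction generalizing b with
  | _ a IHa =>
    induction b using Ordinal.induction with
    | _ b IHb =>
      rw [nmul_def' a b, nmul_def' b a]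
      congr 1
      ext x
      simp only [Set.mem_setOf_eq]
      constructor
      · intro H d hd c hc
        have := H c hc d hd
        rw [IHa c hc b, IHb d hd, IHa c hc d, nadd_comm (b ⨳ c)] at this
        exact this
      · intro H c hc d hd
        have := H d hd c hc
        rw [← IHa c hc b, ← IHb d hd, ← IHa c hc d, nadd_comm (a ⨳ d)] at this
        exact this

@[simp] theorem nmul_zero (a : Ordinal.{u}) : a ⨳ 0 = 0 := by
  rw [← nonpos_iff_eq_zero, nmul_le_iff]
  exact fun _ _ b hb => absurd hb not_lt_zero

@[simp] theorem zero_nmul (a : Ordinal.{u}) : 0 ⨳ a = 0 := by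
  rw [nmul_comm, nmul_zero]

theorem nmul_one (a : Ordinal.{u}) : a ⨳ 1 = a := by
  induction a using Ordinal.induction with
  | _ a IH =>
    apply le_antisymm
    · rw [nmul_le_iff]
      intro a' ha' b' hb'
      rw [Ordinal.lt_one_iff_zero] at hb'
      subst hb'
      rw [nmul_zero, nmul_zero, nadd_zero, nadd_zero, IH a' ha']
      exact ha'
    · apply le_of_forall_lt
      intro c hc
      refine lt_nmul_iff.2 ⟨c, hc, 0, zero_lt_one, ?_⟩
      rw [nmul_zero, nmul_zero, nadd_zero, nadd_zero, IH c hc]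

theorem nmul_nadd (a b c : Ordinal.{u}) : a ⨳ (b ♯ c) = a ⨳ b ♯ a ⨳ c := by
  induction a using Ordinal.induction generalizing b c with
  | _ a IHa =>
    induction b using Ordinal.induction generalizing c with
    | _ b IHb =>
      induction c using Ordinal.induction with
      | _ c IHc =>
        apply le_antisymm
        · rw [nmul_le_iff]
          intro a' ha d hd
          rw [IHa a' ha b c]
          rcases lt_nadd_iff.1 hd with ⟨b', hb, hd⟩ | ⟨c', hc, hd⟩
          · have h3 := nadd_lt_nadd_of_lt_of_le (nmul_nadd_lt ha hb) (nmul_nadd_le ha.le hd)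
            rw [IHa a' ha b' c, IHb b' hb c] at h3
            exact lt_of_nadd_lt_ac (X := a ⨳ b' ♯ a' ⨳ b') h3 (by ac_rfl) (by ac_rfl)
          · have h3 := nadd_lt_nadd_of_lt_of_le (nmul_nadd_lt ha hc) (nmul_nadd_le ha.le hd)
            rw [IHa a' ha b c', IHc c' hc] at h3
            exact lt_of_nadd_lt_ac (X := a ⨳ c' ♯ a' ⨳ c') h3 (by ac_rfl) (by ac_rfl)
        · rw [nadd_le_iff]
          refine ⟨fun d hd => ?_, fun d hd => ?_⟩
          · obtain ⟨a', ha, b', hb, hd⟩ := lt_nmul_iff.1 hd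
            have h1 := nmul_nadd_lt ha (nadd_lt_nadd_right hb c)
            rw [IHa a' ha b c, IHb b' hb c, IHa a' ha b' c] at h1
            have h4 := nadd_le_nadd_right hd (a' ⨳ c ♯ a ⨳ c)
            have e : (a' ⨳ b ♯ a ⨳ b') ♯ (a' ⨳ c ♯ a ⨳ c) =
                (a' ⨳ b ♯ a' ⨳ c) ♯ (a ⨳ b' ♯ a ⨳ c) := by ac_rfl
            have h5 := h4.trans_lt (e.trans_lt h1)
            exact lt_of_nadd_lt_ac (X := a' ⨳ b' ♯ a' ⨳ c) h5 (by ac_rfl) (by ac_rfl)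
          · obtain ⟨a', ha, c', hc, hd⟩ := lt_nmul_iff.1 hd
            have h1 := nmul_nadd_lt ha (nadd_lt_nadd_left hc b)
            rw [IHa a' ha b c, IHc c' hc, IHa a' ha b c'] at h1
            have h4 := nadd_le_nadd_right hd (a' ⨳ b ♯ a ⨳ b)
            have e : (a' ⨳ c ♯ a ⨳ c') ♯ (a' ⨳ b ♯ a ⨳ b) =
                (a' ⨳ b ♯ a' ⨳ c) ♯ (a ⨳ b ♯ a ⨳ c') := by ac_rfl
            have h5 := h4.trans_lt (e.trans_lt h1)
            exact lt_of_nadd_lt_ac (X := a' ⨳ b ♯ a' ⨳ c') h5 (by ac_rfl) (by ac_rfl)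

theorem nadd_nmul (a b c : Ordinal.{u}) : (a ♯ b) ⨳ c = a ⨳ c ♯ b ⨳ c := by
  rw [nmul_comm, nmul_nadd, nmul_comm c a, nmul_comm c b]

theorem nmul_succ (a b : Ordinal.{u}) : a ⨳ Order.succ b = a ⨳ b ♯ a := by
  have h : Order.succ b = b ♯ 1 := by
    have := nadd_nat b 1
    rw [Nat.cast_one] at this
    rw [this, add_one_eq_succ]
  rw [h, nmul_nadd, nmul_one]

theorem nmul_lt_nmul_of_pos_left {a b c : Ordinal.{u}} (h₁ : a < b) (h₂ : 0 < c) :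
    c ⨳ a < c ⨳ b :=
  lt_nmul_iff.2 ⟨0, h₂, a, h₁, by simp⟩

theorem nmul_le_nmul_left {a b : Ordinal.{u}} (h : a ≤ b) (c : Ordinal.{u}) : c ⨳ a ≤ c ⨳ b := by
  rcases h.lt_or_eq with h | rfl
  · rcases eq_zero_or_pos c with rfl | hc
    · simp
    · exact (nmul_lt_nmul_of_pos_left h hc).le
  · exact le_rfl

theorem nmul_le_nmul_right {a b : Ordinal.{u}} (h : a ≤ b) (c : Ordinal.{u}) :
    a ⨳ c ≤ b ⨳ c := by
  rw [nmul_comm a, nmul_comm b]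
  exact nmul_le_nmul_left h c

theorem nmul_assoc (a : Ordinal.{u}) (k n : ℕ) :
    a ⨳ (k : Ordinal) ⨳ (n : Ordinal) = a ⨳ ((k : Ordinal) ⨳ (n : Ordinal)) := by
  induction n with
  | zero => simp
  | succ n IH => rw [Nat.cast_succ, add_one_eq_succ, nmul_succ, nmul_succ, IH, nmul_nadd]

/-! A type synonym carrying natural addition as `+`. -/

def NatOrdinal : Type (u + 1) := Ordinal.{u}

def NatOrdinal.toOrdinal (a : NatOrdinal.{u}) : Ordinal.{u} := a

def _root_.Ordinal.toNatOrdinal (a : Ordinal.{u}) : NatOrdinal.{u} := a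

noncomputable instance : LinearOrder NatOrdinal.{u} := inferInstanceAs (LinearOrder Ordinal.{u})

noncomputable instance : OrderBot NatOrdinal.{u} := inferInstanceAs (OrderBot Ordinal.{u})

noncomputable instance : Add NatOrdinal.{u} := ⟨fun a b => Ordinal.nadd a b⟩

noncomputable instance : Zero NatOrdinal.{u} := ⟨(0 : Ordinal.{u})⟩

noncomputable instance : AddCommMonoid NatOrdinal.{u} where
  add_assoc := nadd_assoc
  zero_add := zero_nadd
  add_zero := nadd_zero
  add_comm := nadd_comm
  nsmul := nsmulRec

instance : IsOrderedCancelAddMonoid NatOrdinal.{u} where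
  add_le_add_left a b h c := nadd_le_nadd_right h c
  le_of_add_le_add_left a b c h := le_of_nadd_le_nadd_left h

theorem nadd_eq_add (a b : Ordinal.{u}) :
    a ♯ b = NatOrdinal.toOrdinal (Ordinal.toNatOrdinal a + Ordinal.toNatOrdinal b) := rfl

@[simp] theorem NatOrdinal.toOrdinal_toNatOrdinal (a : NatOrdinal.{u}) :
    Ordinal.toNatOrdinal (NatOrdinal.toOrdinal a) = a := rfl

@[simp] theorem NatOrdinal.toOrdinal_zero : NatOrdinal.toOrdinal (0 : NatOrdinal.{u}) = 0 := rfl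

theorem add_le_nadd' (a b : Ordinal) : a + b ≤ a ♯ b := by
  induction b using Ordinal.induction with
  | _ b IH =>
    rcases Ordinal.zero_or_succ_or_isSuccLimit b with h | ⟨c, rfl⟩ | h
    · simp [h]
    · rw [add_succ, nadd_succ]
      exact Order.succ_le_succ (IH c (Order.lt_succ c))
    · rw [add_le_iff_of_isSuccLimit h]
      intro b' hb'
      exact (IH b' hb').trans (nadd_le_nadd_left hb'.le a)

theorem nmul_natS (x : Ordinal) (n : ℕ) :
    x ⨳ ((n + 1 : ℕ) : Ordinal) = x ⨳ (n : Ordinal) ♯ x := by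
  rw [Nat.cast_succ, add_one_eq_succ, nmul_succ]

theorem natCast_nmul (n m : ℕ) : (n : Ordinal) ⨳ (m : Ordinal) = ((n * m : ℕ) : Ordinal) := by
  induction m with
  | zero => simp [nmul_zero]
  | succ m IH =>
    rw [nmul_natS, IH, nadd_nat, ← Nat.cast_add, Nat.mul_succ]

/-- The grand ladder: `ω ^ l` is `♯`-principal, and multiples of `ω ^ l` align `♯` with `+`. -/
theorem ladder (l : Ordinal) :
    (∀ x y, x < ω ^ l → y < ω ^ l → x ♯ y < ω ^ l) ∧
    (∀ a w, w < ω ^ l → ω ^ l * a ♯ w = ω ^ l * a + w) ∧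
    (∀ a, ω ^ l * a ♯ ω ^ l = ω ^ l * (a + 1)) := by
  induction l using Ordinal.induction with
  | _ l IH =>
    have hP0 : (ω : Ordinal) ^ l ≠ 0 := (opow_pos l omega0_pos).ne'
    set P := (ω : Ordinal) ^ l with hP
    -- Part 1 : NP
    have NP : ∀ x y, x < P → y < P → x ♯ y < P := by
      rcases Ordinal.zero_or_succ_or_isSuccLimit l with h0 | ⟨l₀, rfl⟩ | hlim
      · intro x y hx hy
        rw [hP, h0, opow_zero, Ordinal.lt_one_iff_zero] at hx hy
        simp [hx, hy, hP, h0]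
      · obtain ⟨NP₀, AL₀, SA₀⟩ := IH l₀ (Order.lt_succ l₀)
        set Q := (ω : Ordinal) ^ l₀ with hQ
        have hQ0 : Q ≠ 0 := (opow_pos l₀ omega0_pos).ne'
        have hPQ : P = Q * ω := by rw [hP, hQ, opow_succ]
        have PQfin : ∀ n m : ℕ, Q * n ♯ Q * m = Q * ((n + m : ℕ) : Ordinal) := by
          intro n m
          induction m with
          | zero => simp
          | succ m IHm =>
            have h1 : Q * ((m + 1 : ℕ) : Ordinal) = Q * m ♯ Q := by
              rw [Nat.cast_succ, SA₀]
            rw [h1, ← nadd_assoc, IHm, SA₀, ← Nat.cast_succ]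
            congr 2
        intro x y hx hy
        rw [hPQ] at hx hy ⊢
        obtain ⟨n₁, hn₁⟩ := lt_omega0.1 ((Ordinal.div_lt hQ0).2 hx)
        obtain ⟨n₂, hn₂⟩ := lt_omega0.1 ((Ordinal.div_lt hQ0).2 hy)
        have hr₁ : x % Q < Q := mod_lt x hQ0
        have hr₂ : y % Q < Q := mod_lt y hQ0
        have hxd : x ≤ Q * n₁ ♯ x % Q := by
          calc x = Q * (x / Q) + x % Q := (div_add_mod x Q).symm
          _ ≤ Q * (x / Q) ♯ x % Q := add_le_nadd' _ _
          _ = Q * n₁ ♯ x % Q := by rw [hn₁]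
        have hyd : y ≤ Q * n₂ ♯ y % Q := by
          calc y = Q * (y / Q) + y % Q := (div_add_mod y Q).symm
          _ ≤ Q * (y / Q) ♯ y % Q := add_le_nadd' _ _
          _ = Q * n₂ ♯ y % Q := by rw [hn₂]
        calc x ♯ y ≤ (Q * n₁ ♯ x % Q) ♯ (Q * n₂ ♯ y % Q) := nadd_le_nadd hxd hyd
        _ = (Q * n₁ ♯ Q * n₂) ♯ (x % Q ♯ y % Q) := by
            rw [nadd_assoc, nadd_assoc]
            congr 1
            rw [← nadd_assoc, ← nadd_assoc, nadd_comm (x % Q)]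
        _ = Q * ((n₁ + n₂ : ℕ) : Ordinal) ♯ (x % Q ♯ y % Q) := by rw [PQfin]
        _ = Q * ((n₁ + n₂ : ℕ) : Ordinal) + (x % Q ♯ y % Q) := AL₀ _ _ (NP₀ _ _ hr₁ hr₂)
        _ < Q * ((n₁ + n₂ : ℕ) : Ordinal) + Q := by
            exact add_lt_add_right (NP₀ _ _ hr₁ hr₂) _
        _ = Q * (((n₁ + n₂ : ℕ) : Ordinal) + 1) := by rw [mul_add_one]
        _ ≤ Q * ω := by
            apply mul_le_mul_right
            rw [← Nat.cast_succ]
            exact (nat_lt_omega0 _).le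
      · intro x y hx hy
        rw [hP] at hx hy ⊢
        obtain ⟨l₁, hl₁, hxl⟩ := (lt_opow_of_isSuccLimit omega0_ne_zero hlim).1 hx
        obtain ⟨l₂, hl₂, hyl⟩ := (lt_opow_of_isSuccLimit omega0_ne_zero hlim).1 hy
        have hx' : x < ω ^ max l₁ l₂ :=
          hxl.trans_le (opow_le_opow_right omega0_pos (le_max_left _ _))
        have hy' : y < ω ^ max l₁ l₂ :=
          hyl.trans_le (opow_le_opow_right omega0_pos (le_max_right _ _))
        have := (IH (max l₁ l₂) (max_lt hl₁ hl₂)).1 x y hx' hy'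
        exact this.trans_le (opow_le_opow_right omega0_pos (max_lt hl₁ hl₂).le)
    have AL : ∀ a w, w < P → P * a ♯ w = P * a + w := by
      intro a
      induction a using Ordinal.induction with
      | _ a IHa =>
        intro w
        induction w using Ordinal.induction with
        | _ w IHw =>
          intro hw
          refine le_antisymm ?_ (add_le_nadd' _ _)
          apply le_of_forall_lt
          intro z hz
          rcases lt_nadd_iff.1 hz with ⟨u, hu, hzu⟩ | ⟨w', hw', hzw⟩
          · have hc : u / P < a := (Ordinal.div_lt hP0).2 hu
            have hr : u % P < P := mod_lt u hP0
            have hud : u ≤ P * (u / P) ♯ u % P := by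
              calc u = P * (u / P) + u % P := (div_add_mod u P).symm
              _ ≤ _ := add_le_nadd' _ _
            have h2 : z < P * a := by
              calc z ≤ u ♯ w := hzu
              _ ≤ (P * (u / P) ♯ u % P) ♯ w := nadd_le_nadd_right hud w
              _ = P * (u / P) ♯ (u % P ♯ w) := nadd_assoc _ _ _
              _ = P * (u / P) + (u % P ♯ w) := IHa _ hc _ (NP _ _ hr hw)
              _ < P * (u / P) + P := add_lt_add_right (NP _ _ hr hw) _
              _ = P * (u / P + 1) := (mul_add_one _ _).symm
              _ ≤ P * a := mul_le_mul_right
                  (by rw [add_one_eq_succ, Order.succ_le_iff]; exact hc) _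
            exact h2.trans_le le_self_add
          · calc z ≤ P * a ♯ w' := hzw
            _ = P * a + w' := IHw w' hw' (hw'.trans hw)
            _ < P * a + w := add_lt_add_right hw' _
    have SA : ∀ a, P * a ♯ P = P * (a + 1) := by
      intro a
      induction a using Ordinal.induction with
      | _ a IHa =>
        refine le_antisymm ?_ ?_
        · apply le_of_forall_lt
          intro z hz
          rcases lt_nadd_iff.1 hz with ⟨u, hu, hzu⟩ | ⟨w, hw, hzw⟩
          · have hc : u / P < a := (Ordinal.div_lt hP0).2 hu
            have hr : u % P < P := mod_lt u hP0
            have hud : u ≤ P * (u / P) ♯ u % P := by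
              calc u = P * (u / P) + u % P := (div_add_mod u P).symm
              _ ≤ _ := add_le_nadd' _ _
            calc z ≤ u ♯ P := hzu
            _ ≤ (P * (u / P) ♯ u % P) ♯ P := nadd_le_nadd_right hud P
            _ = (P * (u / P) ♯ P) ♯ u % P := by
                rw [nadd_assoc, nadd_assoc, nadd_comm (u % P)]
            _ = P * (u / P + 1) ♯ u % P := by rw [IHa _ hc]
            _ = P * (u / P + 1) + u % P := AL _ _ hr
            _ < P * (u / P + 1) + P := add_lt_add_right hr _
            _ = P * (u / P + 1 + 1) := (mul_add_one _ _).symm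
            _ ≤ P * (a + 1) := mul_le_mul_right
                (add_le_add_left (by rw [add_one_eq_succ, Order.succ_le_iff]; exact hc) 1) _
          · calc z ≤ P * a ♯ w := hzw
            _ = P * a + w := AL _ _ hw
            _ < P * a + P := add_lt_add_right hw _
            _ = P * (a + 1) := (mul_add_one _ _).symm
        · rw [mul_add_one]
          exact add_le_nadd' _ _
    exact ⟨NP, AL, SA⟩



theorem ladder_NP {l x y : Ordinal} (hx : x < ω ^ l) (hy : y < ω ^ l) : x ♯ y < ω ^ l :=
  (ladder l).1 x y hx hy

theorem ladder_SA (l a : Ordinal) : ω ^ l * a ♯ ω ^ l = ω ^ l * (a + 1) :=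
  (ladder l).2.2 a

/-- `ω ^ l ⨳ k = ω ^ l * k` for natural `k`. -/
theorem opow_nmul_nat (l : Ordinal) (k : ℕ) :
    (ω : Ordinal) ^ l ⨳ (k : Ordinal) = ω ^ l * (k : Ordinal) := by
  induction k with
  | zero => simp [nmul_zero]
  | succ k IH =>
    rw [nmul_natS, IH, ladder_SA, Nat.cast_succ]

theorem nmul_nat_lt_opow {l γ : Ordinal} (hγ : γ < ω ^ l) (k : ℕ) :
    γ ⨳ (k : Ordinal) < ω ^ l := by
  induction k with
  | zero => simpa [nmul_zero] using opow_pos l omega0_pos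
  | succ k IH =>
    rw [nmul_natS]
    exact ladder_NP IH hγ

/-- Key inequality, small case: `γ < ω ^ l` gives `γ ⨳ ω ♯ ω ^ l ⨳ N < ω ^ l ⨳ ω`. -/
theorem starP_small {l γ : Ordinal} (hγ : γ < ω ^ l) (N : ℕ) :
    γ ⨳ ω ♯ (ω : Ordinal) ^ l ⨳ (N : Ordinal) < (ω : Ordinal) ^ l ⨳ ω := by
  set p := (ω : Ordinal) ^ l with hp
  refine lt_nmul_iff.2 ⟨γ, hγ, ((N + 1 : ℕ) : Ordinal), nat_lt_omega0 _, ?_⟩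
  calc γ ⨳ ω ♯ p ⨳ (N : Ordinal) ♯ γ ⨳ ((N + 1 : ℕ) : Ordinal)
      = γ ⨳ ω ♯ (p ⨳ (N : Ordinal) ♯ γ ⨳ ((N + 1 : ℕ) : Ordinal)) := nadd_assoc _ _ _
    _ ≤ γ ⨳ ω ♯ (p ⨳ (N : Ordinal) ♯ p) :=
        nadd_le_nadd_left (nadd_le_nadd_left (nmul_nat_lt_opow hγ (N + 1)).le _) _
    _ = γ ⨳ ω ♯ p ⨳ ((N + 1 : ℕ) : Ordinal) := by rw [nmul_natS]

/-- Key inequality, `ω`-power case. -/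
theorem starP (l γ : Ordinal) (N : ℕ) :
    γ ⨳ ω ♯ (ω : Ordinal) ^ l ⨳ (N : Ordinal) < (γ + ω ^ l) ⨳ ω := by
  set p := (ω : Ordinal) ^ l with hp
  have hp0 : p ≠ 0 := (opow_pos l omega0_pos).ne'
  rcases lt_or_ge γ p with hγ | hγ
  · have habs : γ + p = p := add_absorp hγ le_rfl
    rw [habs]
    exact starP_small hγ N
  · have hdm : p * (γ / p) + γ % p = γ := div_add_mod γ p
    have hR : γ % p < p := mod_lt γ hp0
    have key : γ + p = p * (γ / p + 1) := by
      conv_lhs => rw [← hdm]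
      rw [add_assoc, add_absorp hR le_rfl, mul_add_one]
    have hγle : γ ≤ p * (γ / p) ♯ γ % p := by
      calc γ = p * (γ / p) + γ % p := hdm.symm
      _ ≤ _ := add_le_nadd' _ _
    calc γ ⨳ ω ♯ p ⨳ (N : Ordinal)
        ≤ (p * (γ / p) ♯ γ % p) ⨳ ω ♯ p ⨳ (N : Ordinal) :=
          nadd_le_nadd_right (nmul_le_nmul_right hγle ω) _
      _ = (p * (γ / p)) ⨳ ω ♯ ((γ % p) ⨳ ω ♯ p ⨳ (N : Ordinal)) := by
          rw [nadd_nmul, nadd_assoc]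
      _ < (p * (γ / p)) ⨳ ω ♯ p ⨳ ω := nadd_lt_nadd_left (starP_small hR N) _
      _ = ((p * (γ / p)) ♯ p) ⨳ ω := (nadd_nmul _ _ _).symm
      _ = (p * (γ / p + 1)) ⨳ ω := by rw [ladder_SA]
      _ = (γ + p) ⨳ ω := by rw [key]

/-- THE key inequality: for `0 < ε`, `γ ⨳ ω ♯ ε ⨳ N < (γ + ε) ⨳ ω`. -/
theorem star {ε : Ordinal} (γ : Ordinal) (N : ℕ) (hε : 0 < ε) :
    γ ⨳ ω ♯ ε ⨳ (N : Ordinal) < (γ + ε) ⨳ ω := by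
  set l := log ω ε with hl
  have hpε : (ω : Ordinal) ^ l ≤ ε := opow_log_le_self ω hε.ne'
  have hεp : ε < ω ^ l * ω := by
    rw [← opow_succ]
    exact lt_opow_succ_log_self one_lt_omega0 ε
  obtain ⟨k', hk', hεk⟩ := (lt_mul_iff_of_isSuccLimit isSuccLimit_omega0).1 hεp
  obtain ⟨K, rfl⟩ := lt_omega0.1 hk'
  have h1 : ε ⨳ (N : Ordinal) ≤ (ω : Ordinal) ^ l ⨳ ((K * N : ℕ) : Ordinal) := by
    calc ε ⨳ (N : Ordinal) ≤ (ω ^ l * K) ⨳ (N : Ordinal) := nmul_le_nmul_right hεk.le _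
    _ = ((ω : Ordinal) ^ l ⨳ (K : Ordinal)) ⨳ (N : Ordinal) := by rw [opow_nmul_nat]
    _ = (ω : Ordinal) ^ l ⨳ ((K : Ordinal) ⨳ (N : Ordinal)) := nmul_assoc _ _ _
    _ = _ := by rw [natCast_nmul]
  calc γ ⨳ ω ♯ ε ⨳ (N : Ordinal) ≤ γ ⨳ ω ♯ (ω : Ordinal) ^ l ⨳ ((K * N : ℕ) : Ordinal) :=
      nadd_le_nadd_left h1 _
  _ < (γ + ω ^ l) ⨳ ω := starP l γ (K * N)
  _ ≤ (γ + ε) ⨳ ω := nmul_le_nmul_right (add_le_add_right hpε γ) ω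

/-! ### Ordinal subtraction helpers -/

theorem sub_mono_left {x y : Ordinal} (β : Ordinal) (h : x ≤ y) : x - β ≤ y - β :=
  Ordinal.sub_le.2 (h.trans (le_add_sub y β))

theorem sub_anti_right {β₂ β : Ordinal} (c : Ordinal) (h : β₂ ≤ β) : c - β ≤ c - β₂ :=
  Ordinal.sub_le.2 ((le_add_sub c β₂).trans (add_le_add_left h _))

theorem sub_lt_sub' {x y β : Ordinal} (hxy : x < y) (hβy : β < y) : x - β < y - β := by
  rcases le_or_gt β x with h | h
  · rw [Ordinal.lt_sub, Ordinal.add_sub_cancel_of_le h]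
    exact hxy
  · rw [Ordinal.sub_eq_zero_iff_le.2 h.le, Ordinal.lt_sub, add_zero]
    exact hβy

theorem sub_decomp {γ β c : Ordinal} (h1 : γ ≤ β) (h2 : β ≤ c) :
    c - γ = (β - γ) + (c - β) := by
  have := add_right_inj γ (b := c - γ) (c := (β - γ) + (c - β))
  apply this.1
  rw [Ordinal.add_sub_cancel_of_le (h1.trans h2), ← add_assoc,
    Ordinal.add_sub_cancel_of_le h1, Ordinal.add_sub_cancel_of_le h2]

/-! ### Natural (Hessenberg) sums over finite sets -/

noncomputable def nS (F : Finset ℕ) (g : ℕ → Ordinal) : Ordinal :=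
  NatOrdinal.toOrdinal (∑ i ∈ F, Ordinal.toNatOrdinal (g i))

theorem toNat_le {a b : Ordinal} : Ordinal.toNatOrdinal a ≤ Ordinal.toNatOrdinal b ↔ a ≤ b :=
  Iff.rfl

theorem toNat_lt {a b : Ordinal} : Ordinal.toNatOrdinal a < Ordinal.toNatOrdinal b ↔ a < b :=
  Iff.rfl

@[simp] theorem nS_empty (g : ℕ → Ordinal) : nS ∅ g = 0 := by simp [nS]

theorem nS_insert {j : ℕ} {F : Finset ℕ} (h : j ∉ F) (g : ℕ → Ordinal) :
    nS (insert j F) g = g j ♯ nS F g := by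
  rw [nS, Finset.sum_insert h, nadd_eq_add]
  rfl

theorem nS_erase {j : ℕ} {F : Finset ℕ} (h : j ∈ F) (g : ℕ → Ordinal) :
    nS F g = g j ♯ nS (F.erase j) g := by
  conv_lhs => rw [← Finset.insert_erase h]
  exact nS_insert (Finset.notMem_erase j F) g

theorem nS_mono {F : Finset ℕ} {g h : ℕ → Ordinal} (hle : ∀ i ∈ F, g i ≤ h i) :
    nS F g ≤ nS F h := by
  have h1 : (∑ i ∈ F, Ordinal.toNatOrdinal (g i)) ≤ ∑ i ∈ F, Ordinal.toNatOrdinal (h i) :=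
    Finset.sum_le_sum fun i hi => hle i hi
  exact h1

theorem nS_lt_nS {F : Finset ℕ} {g h : ℕ → Ordinal} (hle : ∀ i ∈ F, g i ≤ h i)
    {j : ℕ} (hj : j ∈ F) (hlt : g j < h j) : nS F g < nS F h := by
  have h1 : (∑ i ∈ F, Ordinal.toNatOrdinal (g i)) < ∑ i ∈ F, Ordinal.toNatOrdinal (h i) :=
    Finset.sum_lt_sum (fun i hi => hle i hi) ⟨j, hj, hlt⟩
  exact h1

theorem nS_subset {F G : Finset ℕ} (h : F ⊆ G) (g : ℕ → Ordinal) : nS F g ≤ nS G g := by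
  have h1 : (∑ i ∈ F, Ordinal.toNatOrdinal (g i)) ≤ ∑ i ∈ G, Ordinal.toNatOrdinal (g i) :=
    Finset.sum_le_sum_of_subset_of_nonneg h fun i _ _ => bot_le
  exact h1

theorem nS_congr {F : Finset ℕ} {g h : ℕ → Ordinal} (he : ∀ i ∈ F, g i = h i) :
    nS F g = nS F h := by
  unfold nS
  congr 1
  exact Finset.sum_congr rfl fun i hi => by rw [he i hi]

theorem nS_filter {F : Finset ℕ} {g : ℕ → Ordinal} (p : ℕ → Prop) [DecidablePred p]
    (h : ∀ i ∈ F, g i ≠ 0 → p i) : nS (F.filter p) g = nS F g := by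
  unfold nS
  congr 1
  refine Finset.sum_filter_of_ne fun i hi hne => h i hi ?_
  exact hne

theorem nS_inter_diff (F G : Finset ℕ) (g : ℕ → Ordinal) :
    nS G g = nS (G ∩ F) g ♯ nS (G \ F) g := by
  have h1 := Finset.sum_inter_add_sum_sdiff G F (fun i => Ordinal.toNatOrdinal (g i))
  exact (congrArg NatOrdinal.toOrdinal h1).symm

theorem nS_const_nmul {F : Finset ℕ} {g : ℕ → Ordinal} {δ : Ordinal}
    (h : ∀ i ∈ F, g i ≤ δ) : nS F g ≤ δ ⨳ (F.card : Ordinal) := by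
  classical
  induction F using Finset.induction_on with
  | empty => simp
  | @insert j F hj IH =>
    rw [nS_insert hj, Finset.card_insert_of_notMem hj, nmul_natS]
    rw [nadd_comm (δ ⨳ (F.card : Ordinal)) δ]
    exact nadd_le_nadd (h j (Finset.mem_insert_self j F))
      (IH fun i hi => h i (Finset.mem_insert_of_mem hi))

theorem nS_nadd_split (F : Finset ℕ) (u : Ordinal) (v : ℕ → Ordinal) :
    nS F (fun i => u ♯ v i) = u ⨳ (F.card : Ordinal) ♯ nS F v := by
  classical
  induction F using Finset.induction_on with
  | empty => simp [nmul_zero]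
  | @insert j F hj IH =>
    rw [nS_insert hj, nS_insert hj, IH, Finset.card_insert_of_notMem hj, nmul_natS]
    rw [nadd_comm (u ⨳ (F.card : Ordinal)) u, nadd_assoc, nadd_assoc]
    congr 1
    rw [← nadd_assoc, ← nadd_assoc, nadd_comm (v j)]

theorem nS_decomp {F : Finset ℕ} {g : ℕ → Ordinal} {D : Ordinal} (h : D < nS F g) :
    ∃ j ∈ F, ∃ d < g j, D ≤ d ♯ nS (F.erase j) g := by
  classical
  induction F using Finset.induction_on generalizing D with
  | empty =>
    rw [nS_empty] at h
    exact absurd h (not_lt_zero)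
  | @insert j₀ F hj₀ IH =>
    rw [nS_insert hj₀] at h
    rcases lt_nadd_iff.1 h with ⟨x, hx, hDx⟩ | ⟨S, hS, hDS⟩
    · refine ⟨j₀, Finset.mem_insert_self _ _, x, hx, ?_⟩
      rwa [Finset.erase_insert hj₀]
    · obtain ⟨j, hjF, d, hd, hSd⟩ := IH hS
      refine ⟨j, Finset.mem_insert_of_mem hjF, d, hd, ?_⟩
      have hne : j₀ ≠ j := fun he => hj₀ (he ▸ hjF)
      have hj₀e : j₀ ∉ F.erase j := fun hc => hj₀ (Finset.mem_of_mem_erase hc)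
      rw [Finset.erase_insert_of_ne hne, nS_insert hj₀e]
      calc D ≤ g j₀ ♯ S := hDS
      _ ≤ g j₀ ♯ (d ♯ nS (F.erase j) g) := nadd_le_nadd_left hSd _
      _ = d ♯ (g j₀ ♯ nS (F.erase j) g) := by
          rw [← nadd_assoc, ← nadd_assoc, nadd_comm (g j₀) d]

theorem nS_zero (M : Finset ℕ) : nS M (fun _ => 0) = 0 := by
  unfold nS
  rw [show (fun i => Ordinal.toNatOrdinal ((fun _ => (0:Ordinal)) i)) = fun _ => (0:NatOrdinal) from rfl]
  simp

theorem nS_const (M : Finset ℕ) (c : Ordinal) : nS M (fun _ => c) = c ⨳ (M.card : Ordinal) := by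
  have h := nS_nadd_split M c (fun _ => 0)
  simpa [nS_zero] using h

/-! ### Sequences and their values -/

noncomputable def seqF (β : Ordinal) (F : Finset ℕ) (f : ℕ → Ordinal) : ℕ → Ordinal :=
  fun i => if i ∈ F then f i else β

noncomputable def TV (β : Ordinal) (F : Finset ℕ) (f : ℕ → Ordinal) : Ordinal :=
  β ⨳ ω ♯ nS F (fun i => f i - β)

/-! ### Rank machinery -/

theorem vRank_lt_of_prec (hwf : WellFounded seqPrec) {b a : ℕ → Ordinal}
    (h : seqPrec b a) : vRank hwf b < vRank hwf a := by
  letI : IsWellFounded (ℕ → Ordinal) seqPrec := ⟨hwf⟩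
  exact IsWellFounded.rank_lt_of_rel h

theorem vRank_le (hwf : WellFounded seqPrec) {a : ℕ → Ordinal} {X : Ordinal.{1}}
    (h : ∀ b, seqPrec b a → vRank hwf b < X) : vRank hwf a ≤ X := by
  unfold vRank
  rw [@IsWellFounded.rank_eq _ seqPrec ⟨hwf⟩ a]
  exact Ordinal.iSup_le fun b => Order.succ_le_of_lt (h b.1 b.2)

theorem vRank_mono (hwf : WellFounded seqPrec) {b a : ℕ → Ordinal} (h : ∀ i, b i ≤ a i) :
    vRank hwf b ≤ vRank hwf a := by
  apply vRank_le hwf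
  intro c hc
  obtain ⟨i₀, F, β, h1, h2, h3, h4⟩ := hc
  exact vRank_lt_of_prec hwf ⟨i₀, F, β, h1, h2.trans_le (h i₀),
    fun i => (h3 i).trans (h i), h4⟩

theorem natCast_nadd (n m : ℕ) : ((n + m : ℕ) : Ordinal) = (n : Ordinal) ♯ (m : Ordinal) := by
  rw [nadd_nat, Nat.cast_add]

theorem nmul_nat_add (x : Ordinal) (n m : ℕ) :
    x ⨳ ((n + m : ℕ) : Ordinal) = x ⨳ (n : Ordinal) ♯ x ⨳ (m : Ordinal) := by
  rw [natCast_nadd, nmul_nadd]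

theorem seqF_mem {β : Ordinal} {F : Finset ℕ} {f : ℕ → Ordinal} {i : ℕ} (h : i ∈ F) :
    seqF β F f i = f i := by simp [seqF, h]

theorem seqF_not_mem {β : Ordinal} {F : Finset ℕ} {f : ℕ → Ordinal} {i : ℕ} (h : i ∉ F) :
    seqF β F f i = β := by simp [seqF, h]

theorem sub_pos_of_lt {β' β : Ordinal} (h : β' < β) : 0 < β - β' := by
  rw [Ordinal.lt_sub, add_zero]; exact h

/-- Upper bound step: any `≺`-predecessor of a nice sequence has rank below the value. -/
theorem upper_step (hwf : WellFounded seqPrec) {β : Ordinal} {F : Finset ℕ} {f : ℕ → Ordinal}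
    (hstrict : ∀ i ∈ F, β < f i)
    (IH : ∀ t' < TV β F f, ∀ (β₂ : Ordinal) (F₂ : Finset ℕ) (f₂ : ℕ → Ordinal),
      (∀ i ∈ F₂, β₂ < f₂ i) → TV β₂ F₂ f₂ = t' →
      vRank hwf (seqF β₂ F₂ f₂) = Ordinal.lift.{1} t')
    {b : ℕ → Ordinal} (hb : seqPrec b (seqF β F f)) :
    vRank hwf b < Ordinal.lift.{1} (TV β F f) := by
  classical
  obtain ⟨i₀, F', β', hb1, hb2, hb3, hb4⟩ := hb
  by_cases hi₀ : i₀ ∈ F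
  · -- Case A : the exceptional coordinate is lowered, base stays β
    set h : ℕ → Ordinal := fun i => max (b i) β with hh
    set G : Finset ℕ := F.filter (fun i => β < h i) with hG
    have hGstrict : ∀ i ∈ G, β < h i := fun i hi => (Finset.mem_filter.1 hi).2
    have hpt : ∀ i, b i ≤ seqF β G h i := by
      intro i
      by_cases hiG : i ∈ G
      · rw [seqF_mem hiG]; exact le_max_left _ _
      · rw [seqF_not_mem hiG]
        by_cases hiF : i ∈ F
        · have hnot : ¬ β < h i := fun hc => hiG (Finset.mem_filter.2 ⟨hiF, hc⟩)
          exact (le_max_left (b i) β).trans (not_lt.1 hnot)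
        · have := hb3 i; rwa [seqF_not_mem hiF] at this
    have hfib : h i₀ < f i₀ := by
      have h2 := hb2; rw [seqF_mem hi₀] at h2
      exact max_lt (lt_of_le_of_lt hb1 h2) (hstrict i₀ hi₀)
    have hTlt : TV β G h < TV β F f := by
      unfold TV
      apply nadd_lt_nadd_left
      have e1 : nS G (fun i => h i - β) = nS F (fun i => h i - β) := by
        apply nS_filter
        intro i _ hne
        exact lt_of_not_ge fun hc => hne (Ordinal.sub_eq_zero_iff_le.2 hc)
      rw [e1]
      refine nS_lt_nS (fun i hi => ?_) hi₀ (sub_lt_sub' hfib (hstrict i₀ hi₀))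
      apply sub_mono_left
      apply max_le
      · have := hb3 i; rwa [seqF_mem hi] at this
      · exact (hstrict i hi).le
    calc vRank hwf b ≤ vRank hwf (seqF β G h) := vRank_mono hwf hpt
    _ = Ordinal.lift.{1} (TV β G h) := IH _ hTlt β G h hGstrict rfl
    _ < Ordinal.lift.{1} (TV β F f) := lift_lt.2 hTlt
  · -- Case B : base drops from β to β'
    have hβ' : β' < β := by have h2 := hb2; rwa [seqF_not_mem hi₀] at h2
    set h : ℕ → Ordinal := fun i => max (b i) β' with hh
    set G0 : Finset ℕ := F ∪ F' with hG0
    set G : Finset ℕ := G0.filter (fun i => β' < h i) with hG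
    have hGstrict : ∀ i ∈ G, β' < h i := fun i hi => (Finset.mem_filter.1 hi).2
    have hpt : ∀ i, b i ≤ seqF β' G h i := by
      intro i
      by_cases hiG : i ∈ G
      · rw [seqF_mem hiG]; exact le_max_left _ _
      · rw [seqF_not_mem hiG]
        by_cases hiG0 : i ∈ G0
        · have hnot : ¬ β' < h i := fun hc => hiG (Finset.mem_filter.2 ⟨hiG0, hc⟩)
          exact (le_max_left (b i) β').trans (not_lt.1 hnot)
        · exact hb4 i fun hiF' => hiG0 (Finset.mem_union_right _ hiF')
    have hfle : ∀ i ∈ F, h i ≤ f i := by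
      intro i hi
      apply max_le
      · have := hb3 i; rwa [seqF_mem hi] at this
      · exact (hβ'.trans (hstrict i hi)).le
    have hble : ∀ i, i ∈ G → i ∉ F → h i ≤ β := by
      intro i _ hiF
      apply max_le
      · have := hb3 i; rwa [seqF_not_mem hiF] at this
      · exact hβ'.le
    have hsplit : nS G (fun i => h i - β') ≤
        (β - β') ⨳ ((((G ∩ F).card + (G \ F).card : ℕ)) : Ordinal) ♯
          nS F (fun i => f i - β) := by
      rw [nS_inter_diff F G (fun i => h i - β')]
      have b1 : nS (G ∩ F) (fun i => h i - β') ≤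
          (β - β') ⨳ ((G ∩ F).card : Ordinal) ♯ nS (G ∩ F) (fun i => f i - β) := by
        calc nS (G ∩ F) (fun i => h i - β')
            ≤ nS (G ∩ F) (fun i => (β - β') ♯ (f i - β)) := by
              apply nS_mono
              intro i hi
              have hiF : i ∈ F := (Finset.mem_inter.1 hi).2
              calc h i - β' ≤ f i - β' := sub_mono_left _ (hfle i hiF)
              _ = (β - β') + (f i - β) := sub_decomp hβ'.le (hstrict i hiF).le
              _ ≤ (β - β') ♯ (f i - β) := add_le_nadd' _ _
          _ = _ := nS_nadd_split _ _ _
      have b2 : nS (G \ F) (fun i => h i - β') ≤ (β - β') ⨳ ((G \ F).card : Ordinal) := by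
        apply nS_const_nmul
        intro i hi
        exact sub_mono_left _
          (hble i (Finset.mem_sdiff.1 hi).1 (Finset.mem_sdiff.1 hi).2)
      calc nS (G ∩ F) (fun i => h i - β') ♯ nS (G \ F) (fun i => h i - β')
          ≤ ((β - β') ⨳ ((G ∩ F).card : Ordinal) ♯ nS (G ∩ F) (fun i => f i - β)) ♯
            (β - β') ⨳ ((G \ F).card : Ordinal) := nadd_le_nadd b1 b2
        _ = (β - β') ⨳ ((((G ∩ F).card + (G \ F).card : ℕ)) : Ordinal) ♯
            nS (G ∩ F) (fun i => f i - β) := by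
            rw [nmul_nat_add, nadd_assoc, nadd_assoc]
            congr 1
            rw [nadd_comm]
        _ ≤ _ := nadd_le_nadd_left
            (nS_subset Finset.inter_subset_right _) _
    have hTlt : TV β' G h < TV β F f := by
      unfold TV
      calc β' ⨳ ω ♯ nS G (fun i => h i - β')
          ≤ β' ⨳ ω ♯ ((β - β') ⨳ ((((G ∩ F).card + (G \ F).card : ℕ)) : Ordinal) ♯
            nS F (fun i => f i - β)) := nadd_le_nadd_left hsplit _
        _ = (β' ⨳ ω ♯ (β - β') ⨳ ((((G ∩ F).card + (G \ F).card : ℕ)) : Ordinal)) ♯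
            nS F (fun i => f i - β) := (nadd_assoc _ _ _).symm
        _ < β ⨳ ω ♯ nS F (fun i => f i - β) := by
            apply nadd_lt_nadd_right
            have hs := star β' ((G ∩ F).card + (G \ F).card) (sub_pos_of_lt hβ')
            rwa [Ordinal.add_sub_cancel_of_le hβ'.le] at hs
    calc vRank hwf b ≤ vRank hwf (seqF β' G h) := vRank_mono hwf hpt
    _ = Ordinal.lift.{1} (TV β' G h) := IH _ hTlt β' G h hGstrict rfl
    _ < Ordinal.lift.{1} (TV β F f) := lift_lt.2 hTlt

theorem nS_union {F M : Finset ℕ} (h : Disjoint F M) (g : ℕ → Ordinal) :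
    nS (F ∪ M) g = nS F g ♯ nS M g := by
  have h1 := Finset.sum_union (f := fun i => Ordinal.toNatOrdinal (g i)) h
  exact congrArg NatOrdinal.toOrdinal h1

theorem nadd_juggle1 (A B C : Ordinal) : A ♯ (B ♯ C) = (A ♯ C) ♯ B := by
  simp only [nadd_eq_add, NatOrdinal.toOrdinal_toNatOrdinal]
  apply congrArg
  abel

theorem nadd_juggle2 (A X D Y : Ordinal) : A ♯ ((X ♯ D) ♯ Y) = (A ♯ (X ♯ Y)) ♯ D := by
  simp only [nadd_eq_add, NatOrdinal.toOrdinal_toNatOrdinal]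
  apply congrArg
  abel

/-- Lower bound step. -/
theorem lower_step (hwf : WellFounded seqPrec) {β : Ordinal} {F : Finset ℕ} {f : ℕ → Ordinal}
    (hstrict : ∀ i ∈ F, β < f i)
    (IH : ∀ t' < TV β F f, ∀ (β₂ : Ordinal) (F₂ : Finset ℕ) (f₂ : ℕ → Ordinal),
      (∀ i ∈ F₂, β₂ < f₂ i) → TV β₂ F₂ f₂ = t' →
      vRank hwf (seqF β₂ F₂ f₂) = Ordinal.lift.{1} t')
    {γ₀ : Ordinal} (hγ₀ : γ₀ < TV β F f) :
    Ordinal.lift.{1} γ₀ < vRank hwf (seqF β F f) := by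
  classical
  set D : Ordinal := nS F (fun i => f i - β) with hD
  -- It suffices to find a strict nice predecessor whose value dominates `γ₀`.
  suffices hsuff : ∃ (β₂ : Ordinal) (F₂ : Finset ℕ) (f₂ : ℕ → Ordinal),
      (∀ i ∈ F₂, β₂ < f₂ i) ∧ seqPrec (seqF β₂ F₂ f₂) (seqF β F f) ∧
      γ₀ ≤ TV β₂ F₂ f₂ ∧ TV β₂ F₂ f₂ < TV β F f by
    obtain ⟨β₂, F₂, f₂, hs₂, hprec, hle, hlt⟩ := hsuff
    calc Ordinal.lift.{1} γ₀ ≤ Ordinal.lift.{1} (TV β₂ F₂ f₂) := lift_le.2 hle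
    _ = vRank hwf (seqF β₂ F₂ f₂) := (IH _ hlt β₂ F₂ f₂ hs₂ rfl).symm
    _ < vRank hwf (seqF β F f) := vRank_lt_of_prec hwf hprec
  rcases lt_nadd_iff.1 hγ₀ with ⟨x, hx, hγx⟩ | ⟨D', hD', hγD⟩
  · -- Case A : lower the base
    obtain ⟨β₂, hβ₂β, w, hw, hxw⟩ := lt_nmul_iff.1 hx
    obtain ⟨m, rfl⟩ := lt_omega0.1 hw
    -- fresh coordinates
    set bnd : ℕ := F.sup id + 1 with hbnd
    set M : Finset ℕ := (Finset.range m).image (fun r => r + bnd) with hM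
    have cardM : M.card = m := by
      rw [hM, Finset.card_image_of_injective _ (add_left_injective bnd), Finset.card_range]
    have disjM : Disjoint F M := by
      rw [Finset.disjoint_right]
      intro i hiM hiF
      obtain ⟨r, _, rfl⟩ := Finset.mem_image.1 hiM
      have h1 : id (r + bnd) ≤ F.sup id := Finset.le_sup hiF
      simp only [id] at h1
      omega
    set i₁ : ℕ := (F ∪ M).sup id + 1 with hi₁def
    have hi₁ : i₁ ∉ F ∪ M := by
      intro hc
      have h1 : id i₁ ≤ (F ∪ M).sup id := Finset.le_sup hc
      simp only [id] at h1
      omega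
    have hi₁F : i₁ ∉ F := fun hc => hi₁ (Finset.mem_union_left _ hc)
    set f₂ : ℕ → Ordinal := fun i => if i ∈ F then f i else β with hf₂
    have hTV₂ : TV β₂ (F ∪ M) f₂ =
        β₂ ⨳ ω ♯ (nS F (fun i => f i - β₂) ♯ (β - β₂) ⨳ (m : Ordinal)) := by
      unfold TV
      rw [nS_union disjM]
      congr 2
      · exact nS_congr fun i hi => by simp only [hf₂, if_pos hi]
      · have e1 : nS M (fun i => f₂ i - β₂) = nS M (fun _ => β - β₂) := by
          apply nS_congr
          intro i hi
          have hiF : i ∉ F := Finset.disjoint_right.1 disjM hi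
          simp only [hf₂, if_neg hiF]
        rw [e1, nS_const M, cardM]
    refine ⟨β₂, F ∪ M, f₂, ?_, ?_, ?_, ?_⟩
    · intro i hi
      by_cases hiF : i ∈ F
      · simp only [hf₂, if_pos hiF]
        exact hβ₂β.trans (hstrict i hiF)
      · simp only [hf₂, if_neg hiF]
        exact hβ₂β
    · refine ⟨i₁, F ∪ M, β₂, ?_, ?_, ?_, ?_⟩
      · rw [seqF_not_mem hi₁]
      · rw [seqF_not_mem hi₁F]
        exact hβ₂β
      · intro i
        by_cases hiFM : i ∈ F ∪ M
        · rw [seqF_mem hiFM]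
          by_cases hiF : i ∈ F
          · simp only [hf₂, if_pos hiF]
            rw [seqF_mem hiF]
          · simp only [hf₂, if_neg hiF]
            rw [seqF_not_mem hiF]
        · rw [seqF_not_mem hiFM]
          by_cases hiF : i ∈ F
          · exact absurd (Finset.mem_union_left _ hiF) hiFM
          · rw [seqF_not_mem hiF]
            exact hβ₂β.le
      · intro i hi
        rw [seqF_not_mem hi]
    · rw [hTV₂]
      have hβm : β ⨳ ((m : ℕ) : Ordinal) ≤ β₂ ⨳ (m : Ordinal) ♯ (β - β₂) ⨳ (m : Ordinal) := by
        calc β ⨳ ((m : ℕ) : Ordinal) = (β₂ + (β - β₂)) ⨳ ((m : ℕ) : Ordinal) := by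
              rw [Ordinal.add_sub_cancel_of_le hβ₂β.le]
        _ ≤ (β₂ ♯ (β - β₂)) ⨳ ((m : ℕ) : Ordinal) := nmul_le_nmul_right (add_le_nadd' _ _) _
        _ = _ := nadd_nmul _ _ _
      have hxb : x ≤ β₂ ⨳ ω ♯ (β - β₂) ⨳ (m : Ordinal) := by
        have h1 : x ♯ β₂ ⨳ (m : Ordinal) ≤
            (β₂ ⨳ ω ♯ (β - β₂) ⨳ (m : Ordinal)) ♯ β₂ ⨳ (m : Ordinal) := by
          calc x ♯ β₂ ⨳ (m : Ordinal) ≤ β₂ ⨳ ω ♯ β ⨳ (m : Ordinal) := hxw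
          _ ≤ β₂ ⨳ ω ♯ (β₂ ⨳ (m : Ordinal) ♯ (β - β₂) ⨳ (m : Ordinal)) :=
              nadd_le_nadd_left hβm _
          _ = _ := by rw [nadd_juggle1]
        exact le_of_nadd_le_nadd_right h1
      calc γ₀ ≤ x ♯ D := hγx
      _ ≤ (β₂ ⨳ ω ♯ (β - β₂) ⨳ (m : Ordinal)) ♯ nS F (fun i => f i - β₂) :=
          nadd_le_nadd hxb (nS_mono fun i _ => sub_anti_right _ hβ₂β.le)
      _ = β₂ ⨳ ω ♯ (nS F (fun i => f i - β₂) ♯ (β - β₂) ⨳ (m : Ordinal)) := by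
          rw [nadd_assoc, nadd_comm ((β - β₂) ⨳ (m : Ordinal))]
    · rw [hTV₂]
      have h2 : nS F (fun i => f i - β₂) ≤ (β - β₂) ⨳ (F.card : Ordinal) ♯ D := by
        calc nS F (fun i => f i - β₂) ≤ nS F (fun i => (β - β₂) ♯ (f i - β)) := by
              apply nS_mono
              intro i hi
              calc f i - β₂ = (β - β₂) + (f i - β) := sub_decomp hβ₂β.le (hstrict i hi).le
              _ ≤ _ := add_le_nadd' _ _
        _ = _ := nS_nadd_split _ _ _
      show _ < TV β F f
      unfold TV
      calc β₂ ⨳ ω ♯ (nS F (fun i => f i - β₂) ♯ (β - β₂) ⨳ (m : Ordinal))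
          ≤ β₂ ⨳ ω ♯ (((β - β₂) ⨳ (F.card : Ordinal) ♯ D) ♯ (β - β₂) ⨳ (m : Ordinal)) :=
            nadd_le_nadd_left (nadd_le_nadd_right h2 _) _
        _ = (β₂ ⨳ ω ♯ ((β - β₂) ⨳ (F.card : Ordinal) ♯ (β - β₂) ⨳ (m : Ordinal))) ♯ D :=
            nadd_juggle2 _ _ _ _
        _ = (β₂ ⨳ ω ♯ (β - β₂) ⨳ ((F.card + m : ℕ) : Ordinal)) ♯ D := by
            rw [nmul_nat_add]
        _ < β ⨳ ω ♯ D := by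
            apply nadd_lt_nadd_right
            have hs := star β₂ (F.card + m) (sub_pos_of_lt hβ₂β)
            rwa [Ordinal.add_sub_cancel_of_le hβ₂β.le] at hs
  · -- Case B : lower one exceptional coordinate
    obtain ⟨j, hjF, d, hd, hD'd⟩ := nS_decomp hD'
    rcases eq_zero_or_pos d with rfl | hd0
    · -- remove coordinate j
      refine ⟨β, F.erase j, f, fun i hi => hstrict i (Finset.mem_of_mem_erase hi), ?_, ?_, ?_⟩
      · refine ⟨j, F, β, ?_, ?_, ?_, ?_⟩
        · rw [seqF_not_mem (Finset.notMem_erase j F)]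
        · rw [seqF_mem hjF]
          exact hstrict j hjF
        · intro i
          by_cases hie : i ∈ F.erase j
          · rw [seqF_mem hie, seqF_mem (Finset.mem_of_mem_erase hie)]
          · rw [seqF_not_mem hie]
            by_cases hiF : i ∈ F
            · rw [seqF_mem hiF]
              have : i = j := by
                by_contra hne
                exact hie (Finset.mem_erase.2 ⟨hne, hiF⟩)
              subst this
              exact (hstrict i hiF).le
            · rw [seqF_not_mem hiF]
        · intro i hi
          by_cases hie : i ∈ F.erase j
          · exact absurd (Finset.mem_of_mem_erase hie) hi
          · rw [seqF_not_mem hie]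
      · calc γ₀ ≤ β ⨳ ω ♯ D' := hγD
        _ ≤ β ⨳ ω ♯ (0 ♯ nS (F.erase j) (fun i => f i - β)) := nadd_le_nadd_left hD'd _
        _ = TV β (F.erase j) f := by rw [zero_nadd]; rfl
      · show _ < TV β F f
        unfold TV
        apply nadd_lt_nadd_left
        rw [nS_erase hjF (fun i => f i - β)]
        have h0 : (0 : Ordinal) < f j - β := sub_pos_of_lt (hstrict j hjF)
        calc nS (F.erase j) (fun i => f i - β)
            = 0 ♯ nS (F.erase j) (fun i => f i - β) := (zero_nadd _).symm
          _ < (f j - β) ♯ nS (F.erase j) (fun i => f i - β) := nadd_lt_nadd_right h0 _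
    · -- lower coordinate j to β + d
      set v : Ordinal := β + d with hv
      have hvlt : v < f j := by
        calc v < β + (f j - β) := add_lt_add_right hd β
        _ = f j := Ordinal.add_sub_cancel_of_le (hstrict j hjF).le
      have hβv : β < v := by
        rw [hv]
        simpa using (add_lt_add_iff_left β).2 hd0
      set f₂ : ℕ → Ordinal := Function.update f j v with hf₂
      have hval : nS F (fun i => f₂ i - β) = d ♯ nS (F.erase j) (fun i => f i - β) := by
        rw [nS_erase hjF (fun i => f₂ i - β)]
        congr 1
        · simp only [hf₂, Function.update_self, hv, Ordinal.add_sub_cancel]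
        · apply nS_congr
          intro i hi
          have : i ≠ j := (Finset.mem_erase.1 hi).1
          simp only [hf₂, Function.update_of_ne this]
      refine ⟨β, F, f₂, ?_, ?_, ?_, ?_⟩
      · intro i hi
        by_cases hij : i = j
        · subst hij
          simpa only [hf₂, Function.update_self] using hβv
        · simpa only [hf₂, Function.update_of_ne hij] using hstrict i hi
      · refine ⟨j, F, v, ?_, ?_, ?_, ?_⟩
        · rw [seqF_mem hjF]
          simp only [hf₂, Function.update_self]
          exact le_rfl
        · rw [seqF_mem hjF]
          exact hvlt
        · intro i
          by_cases hiF : i ∈ F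
          · rw [seqF_mem hiF, seqF_mem hiF]
            by_cases hij : i = j
            · subst hij
              simp only [hf₂, Function.update_self]
              exact hvlt.le
            · simp only [hf₂, Function.update_of_ne hij, le_refl]
          · rw [seqF_not_mem hiF, seqF_not_mem hiF]
        · intro i hi
          rw [seqF_not_mem hi]
          exact hβv.le
      · calc γ₀ ≤ β ⨳ ω ♯ D' := hγD
        _ ≤ β ⨳ ω ♯ (d ♯ nS (F.erase j) (fun i => f i - β)) := nadd_le_nadd_left hD'd _
        _ = TV β F f₂ := by rw [TV, hval]
      · show _ < TV β F f
        unfold TV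
        apply nadd_lt_nadd_left
        rw [hval, nS_erase hjF (fun i => f i - β)]
        exact nadd_lt_nadd_right hd _

/-- The main value computation: a "nice" sequence (`f i` on the finite set `F`, constant `β`
elsewhere, with `β < f i` on `F`) has rank `β ⨳ ω ♯ ⨁_{i ∈ F} (f i - β)`. -/
theorem E (hwf : WellFounded seqPrec) :
    ∀ (t : Ordinal) (β : Ordinal) (F : Finset ℕ) (f : ℕ → Ordinal),
      (∀ i ∈ F, β < f i) → TV β F f = t →
      vRank hwf (seqF β F f) = Ordinal.lift.{1} t := by
  intro t
  induction t using Ordinal.induction with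
  | _ t IHt =>
    intro β F f hstrict ht
    subst ht
    have IH' : ∀ t' < TV β F f, ∀ (β₂ : Ordinal) (F₂ : Finset ℕ) (f₂ : ℕ → Ordinal),
        (∀ i ∈ F₂, β₂ < f₂ i) → TV β₂ F₂ f₂ = t' →
        vRank hwf (seqF β₂ F₂ f₂) = Ordinal.lift.{1} t' :=
      fun t' ht' β₂ F₂ f₂ h1 h2 => IHt t' ht' β₂ F₂ f₂ h1 h2
    apply le_antisymm
    · exact vRank_le hwf fun b hb => upper_step hwf hstrict IH' hb
    · apply le_of_forall_lt
      intro x hx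
      obtain ⟨γ₀, hγ₀, rfl⟩ := lt_lift_iff.1 hx
      exact lower_step hwf hstrict IH' hγ₀

end VRA

open VRA

/-- The value of `v` at the constant sequence `(α, α, α, …)` is the natural product
`α ⨳ ω` (up to the universe lift forced by the fact that `ℕ → Ordinal` lives one universe
higher than `Ordinal`). -/
theorem vRank_const (hwf : WellFounded seqPrec) (α : Ordinal.{0}) :
    vRank hwf (fun _ => α) = Ordinal.lift.{1} (α ⨳ ω) := by
  have h := E hwf (α ⨳ ω) α ∅ (fun _ => 0) (by simp) (by simp [TV])
  have hseq : seqF α ∅ (fun _ => (0 : Ordinal)) = fun _ => α := by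
    funext i
    simp [seqF]
  rwa [hseq] at h
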